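/- For vectors x_i, x_j ∈ ℝ^p, d ≥ 0, and δ > 0, h_δ((‖x_i − x_j‖ − d)₊) = inf over y with ‖y‖ ≤ d of h_δ(‖x_i − x_j − y‖), where h_δ is the Huber loss. -/
import Mathlib


noncomputable def huber (δ t : ℝ) : ℝ := if |t| ≤ δ then t ^ 2 else 2 * δ * |t| - δ ^ 2

lemma huber_nonneg (δ t : ℝ) (hδ : 0 < δ) : 0 ≤ huber δ t := by
  unfold huber
  split_ifs with h
  · positivity
  · push_neg at h
    nlinarith [abs_nonneg t]

lemma huber_mono (δ : ℝ) (hδ : 0 < δ) {a b : ℝ} (ha : 0 ≤ a) (hab : a ≤ b) :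
    huber δ a ≤ huber δ b := by
  have hb : 0 ≤ b := ha.trans hab
  unfold huber
  rw [abs_of_nonneg ha, abs_of_nonneg hb]
  split_ifs with h1 h2 h2
  · nlinarith
  · nlinarith
  · nlinarith
  · nlinarith

theorem huber_pos_part_variational (p : ℕ) (xi xj : EuclideanSpace ℝ (Fin p)) (d δ : ℝ)
    (hd : 0 ≤ d) (hδ : 0 < δ) :
    huber δ (max (‖xi - xj‖ - d) 0) =
      ⨅ y : Metric.closedBall (0 : EuclideanSpace ℝ (Fin p)) d,
        huber δ ‖xi - xj - (y : EuclideanSpace ℝ (Fin p))‖ := by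
  set x := xi - xj with hx
  have hne : Nonempty (Metric.closedBall (0 : EuclideanSpace ℝ (Fin p)) d) :=
    ⟨⟨0, by simpa using hd⟩⟩
  have hbdd : BddBelow (Set.range fun y : Metric.closedBall (0 : EuclideanSpace ℝ (Fin p)) d =>
      huber δ ‖x - (y : EuclideanSpace ℝ (Fin p))‖) :=
    ⟨0, by rintro _ ⟨y, rfl⟩; exact huber_nonneg δ _ hδ⟩
  apply le_antisymm
  · apply le_ciInf
    intro y
    obtain ⟨y, hy⟩ := y
    simp only [Metric.mem_closedBall, dist_zero_right] at hy
    apply huber_mono δ hδ (le_max_right _ _)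
    have h1 : ‖x‖ - d ≤ ‖x - y‖ := by
      have := norm_sub_norm_le x y
      linarith [this, hy]
    exact max_le h1 (norm_nonneg _)
  · by_cases hcase : ‖x‖ ≤ d
    · have : max (‖x‖ - d) 0 = 0 := max_eq_right (by linarith)
      rw [this]
      refine le_trans (ciInf_le hbdd ⟨x, by simpa using hcase⟩) ?_
      simp
    · push_neg at hcase
      have hxpos : 0 < ‖x‖ := lt_of_le_of_lt hd hcase
      set y₀ : EuclideanSpace ℝ (Fin p) := (d / ‖x‖) • x with hy₀
      have hy₀mem : y₀ ∈ Metric.closedBall (0 : EuclideanSpace ℝ (Fin p)) d := by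
        simp only [Metric.mem_closedBall, dist_zero_right, hy₀, norm_smul]
        rw [Real.norm_eq_abs, abs_of_nonneg (div_nonneg hd hxpos.le)]
        rw [div_mul_cancel₀ _ hxpos.ne']
      have hval : ‖x - y₀‖ = ‖x‖ - d := by
        have : x - y₀ = (1 - d / ‖x‖) • x := by
          rw [hy₀, sub_smul, one_smul]
        rw [this, norm_smul, Real.norm_eq_abs,
          abs_of_nonneg (by rw [sub_nonneg]; exact div_le_one_of_le₀ hcase.le hxpos.le)]
        field_simp
      refine le_trans (ciInf_le hbdd ⟨y₀, hy₀mem⟩) ?_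
      rw [hval]
      rw [max_eq_left (by linarith)]
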